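/- Let G and H be connected modular graphs, each with at least 3 vertices. Then SW_3(G □ H) = (|V(G)|·|V(H)| − 2) · ( (|V(G)|²/(|V(H)| − 2)) · SW_3(H) + (|V(H)|²/(|V(G)| − 2)) · SW_3(G) ). -/

import Mathlib

/-- The Steiner distance of a set `S` of vertices of `G`: the minimum number of edges
of a connected subgraph of `G` containing all vertices of `S`. -/
noncomputable def steinerDist {V : Type*} (G : SimpleGraph V) (S : Set V) : ℕ :=
  sInf {n | ∃ H : G.Subgraph, H.Connected ∧ S ⊆ H.verts ∧ H.edgeSet.ncard = n}
/-- The Steiner `k`-Wiener index of `G`: the sum of the Steiner distances of all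
`k`-element subsets of vertices of `G`. -/
noncomputable def steinerWiener {V : Type*} (G : SimpleGraph V) [Fintype V] (k : ℕ) : ℕ :=
  ∑ S ∈ (Finset.univ : Finset V).powersetCard k, steinerDist G (S : Set V)
/-- The interval `I(u,v)`: the set of all vertices lying on shortest `u,v`-paths. -/
def interval {V : Type*} (G : SimpleGraph V) (u v : V) : Set V :=
  {x | G.dist u x + G.dist x v = G.dist u v}
/-- A graph `G` is modular if for every three vertices `x, y, z` some vertex lies
simultaneously on shortest paths between every two of them. -/
def IsModular {V : Type*} (G : SimpleGraph V) : Prop :=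
  ∀ x y z : V, (interval G x y ∩ interval G x z ∩ interval G y z).Nonempty

/-!
Any connected subgraph containing `x, y, z` has at least half the perimeter
`d(x,y) + d(x,z) + d(y,z)` edges, and when some `m` lies on geodesics between every two of
`x, y, z` (which is what modularity provides) the union of geodesics from `x, y, z` to `m`
attains this bound. Since every pair of vertices lies in `n - 2` triples, a connected modular
graph on `n` vertices thus has `4 SW₃ = (n - 2) ∑_{u,v} d(u,v)`. In `G □ H` distances add
coordinatewise, so medians can be taken coordinatewise, `G □ H` is again modular, and
`∑ d_{G □ H} = |V(H)|² ∑ d_G + |V(G)|² ∑ d_H`; eliminating the distance sums gives the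
formula.
-/

open SimpleGraph Finset

namespace SimpleGraph

variable {V : Type*} {K : SimpleGraph V}

lemma Walk.dist_add_dist_of_mem_support {x y w : V} (p : K.Walk x y)
    (hp : p.length = K.dist x y) (hw : w ∈ p.support) :
    K.dist x w + K.dist w y = K.dist x y := by
  classical
  rw [← length_eq_dist_of_subwalk hp (p.isSubwalk_takeUntil hw),
    ← length_eq_dist_of_subwalk hp (p.isSubwalk_dropUntil hw), ← Walk.length_append,
    p.take_spec hw, hp]

lemma Walk.ncard_edgeSet_toSubgraph_le {x y : V} (p : K.Walk x y) :
    p.toSubgraph.edgeSet.ncard ≤ p.length := by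
  classical
  have hedges : p.toSubgraph.edgeSet = ↑p.edges.toFinset := by ext; simp
  rw [hedges, Set.ncard_coe_finset, ← p.length_edges]
  exact p.edges.toFinset_card_le

lemma Reachable.dist_map_le {W : Type*} {K' : SimpleGraph W} (f : K →g K') {u v : V}
    (h : K.Reachable u v) : K'.dist (f u) (f v) ≤ K.dist u v := by
  obtain ⟨p, hp⟩ := h.exists_walk_length_eq_dist
  rw [← hp, ← p.length_map f]
  exact dist_le _

/-- Walk along a geodesic from `x` to `y` and branch off to `z` from the vertex `w` of the
geodesic closest to `z`: the two geodesics meet only in `w`, so together they have at most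
`|V| + 1` vertices. -/
lemma Connected.dist_add_dist_add_dist_add_two_le [Finite V] (hK : K.Connected) (x y z : V) :
    K.dist x y + K.dist x z + K.dist y z + 2 ≤ 2 * Nat.card V := by
  classical
  have := Fintype.ofFinite V
  obtain ⟨p, hp⟩ := hK.exists_walk_length_eq_dist x y
  obtain ⟨w, hwp, hw_min⟩ := p.support.toFinset.exists_min_image (K.dist z) ⟨x, by simp⟩
  rw [List.mem_toFinset] at hwp
  obtain ⟨q, hq⟩ := hK.exists_walk_length_eq_dist z w
  have hinter : q.support.toFinset ∩ p.support.toFinset ⊆ {w} := by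
    intro v hv
    simp only [Finset.mem_inter, List.mem_toFinset] at hv
    have hzv := q.dist_add_dist_of_mem_support hq hv.1
    have hwv := hw_min v (List.mem_toFinset.2 hv.2)
    rw [Finset.mem_singleton, ← hK.dist_eq_zero_iff]
    omega
  have hcard : q.support.toFinset.card + p.support.toFinset.card ≤ Nat.card V + 1 := by
    rw [← Finset.card_union_add_card_inter, Nat.card_eq_fintype_card]
    exact add_le_add (Finset.card_le_univ _)
      ((Finset.card_le_card hinter).trans_eq (card_singleton w))
  rw [List.toFinset_card_of_nodup (q.isPath_of_length_eq_dist hq).support_nodup,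
    List.toFinset_card_of_nodup (p.isPath_of_length_eq_dist hp).support_nodup,
    Walk.length_support, Walk.length_support, hp, hq] at hcard
  have hxy := p.dist_add_dist_of_mem_support hp hwp
  have hxz : K.dist x z ≤ K.dist x w + K.dist w z := hK.dist_triangle
  have hyz : K.dist y z ≤ K.dist y w + K.dist w z := hK.dist_triangle
  rw [K.dist_comm (u := w) (v := z)] at hxz hyz
  rw [K.dist_comm (u := y) (v := w)] at hyz
  omega

lemma Subgraph.Connected.dist_add_dist_add_dist_le [Finite V] {Hs : K.Subgraph}
    (hc : Hs.Connected) {x y z : V} (hx : x ∈ Hs.verts) (hy : y ∈ Hs.verts)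
    (hz : z ∈ Hs.verts) :
    K.dist x y + K.dist x z + K.dist y z ≤ 2 * Hs.edgeSet.ncard := by
  have hperim := hc.coe.dist_add_dist_add_dist_add_two_le ⟨x, hx⟩ ⟨y, hy⟩ ⟨z, hz⟩
  have hverts := hc.coe.card_vert_le_card_edgeSet_add_one
  have hedges : Nat.card Hs.coe.edgeSet = Hs.edgeSet.ncard := by
    rw [← Hs.image_coe_edgeSet_coe,
      Set.ncard_image_of_injective _ (Sym2.map.injective Subtype.val_injective)]
    rfl
  have hdist (a b : Hs.verts) := (hc.coe.preconnected a b).dist_map_le Hs.hom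
  have hxy := hdist ⟨x, hx⟩ ⟨y, hy⟩
  have hxz := hdist ⟨x, hx⟩ ⟨z, hz⟩
  have hyz := hdist ⟨y, hy⟩ ⟨z, hz⟩
  simp only [Subgraph.hom_apply] at hxy hxz hyz
  omega

end SimpleGraph

section Steiner

variable {V : Type*} {K : SimpleGraph V}

lemma steinerDist_le_ncard_edgeSet {S : Set V} {Hs : K.Subgraph} (hc : Hs.Connected)
    (hS : S ⊆ Hs.verts) : steinerDist K S ≤ Hs.edgeSet.ncard :=
  Nat.sInf_le ⟨Hs, hc, hS, rfl⟩

lemma SimpleGraph.Connected.exists_subgraph_ncard_edgeSet_le (hK : K.Connected) (x y z m : V) :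
    ∃ Hs : K.Subgraph, Hs.Connected ∧ {x, y, z} ⊆ Hs.verts ∧
      Hs.edgeSet.ncard ≤ K.dist x m + K.dist y m + K.dist z m := by
  obtain ⟨p, hp⟩ := hK.exists_walk_length_eq_dist x m
  obtain ⟨q, hq⟩ := hK.exists_walk_length_eq_dist y m
  obtain ⟨r, hr⟩ := hK.exists_walk_length_eq_dist z m
  refine ⟨p.toSubgraph ⊔ q.toSubgraph ⊔ r.toSubgraph, ?_, ?_, ?_⟩
  · refine Subgraph.connected_sup (Subgraph.connected_sup p.toSubgraph_connected.preconnected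
      q.toSubgraph_connected.preconnected ⟨m, ?_⟩).preconnected
      r.toSubgraph_connected.preconnected ⟨m, ?_⟩ <;>
    simp
  · simp [Set.insert_subset_iff]
  · calc (p.toSubgraph ⊔ q.toSubgraph ⊔ r.toSubgraph).edgeSet.ncard
        ≤ p.toSubgraph.edgeSet.ncard + q.toSubgraph.edgeSet.ncard
          + r.toSubgraph.edgeSet.ncard := by
          simp only [Subgraph.edgeSet_sup]
          exact (Set.ncard_union_le _ _).trans (by gcongr; exact Set.ncard_union_le _ _)
      _ ≤ K.dist x m + K.dist y m + K.dist z m := by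
          rw [← hp, ← hq, ← hr]
          gcongr <;> exact Walk.ncard_edgeSet_toSubgraph_le _

lemma SimpleGraph.Connected.dist_add_dist_add_dist_le_two_mul_steinerDist [Finite V]
    (hK : K.Connected) (x y z : V) :
    K.dist x y + K.dist x z + K.dist y z ≤ 2 * steinerDist K {x, y, z} := by
  obtain ⟨Hs, hc, hS, -⟩ := hK.exists_subgraph_ncard_edgeSet_le x y z x
  obtain ⟨Hmin, hcmin, hSmin, hmin⟩ : steinerDist K {x, y, z} ∈ _ :=
    Nat.sInf_mem ⟨_, Hs, hc, hS, rfl⟩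
  rw [← hmin]
  exact hcmin.dist_add_dist_add_dist_le (hSmin (by simp)) (hSmin (by simp)) (hSmin (by simp))

lemma two_mul_steinerDist_of_mem_interval [Finite V] (hK : K.Connected) {x y z m : V}
    (hm : m ∈ interval K x y ∩ interval K x z ∩ interval K y z) :
    2 * steinerDist K {x, y, z} = K.dist x y + K.dist x z + K.dist y z := by
  obtain ⟨⟨hxy, hxz⟩, hyz⟩ := hm
  simp only [interval, Set.mem_ofPred_eq] at hxy hxz hyz
  obtain ⟨Hs, hc, hS, hedges⟩ := hK.exists_subgraph_ncard_edgeSet_le x y z m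
  have hupper := (steinerDist_le_ncard_edgeSet hc hS).trans hedges
  have hlower := hK.dist_add_dist_add_dist_le_two_mul_steinerDist x y z
  rw [K.dist_comm (u := m) (v := y), K.dist_comm (u := m) (v := z)] at *
  omega

lemma IsModular.two_mul_steinerDist [Finite V] (hK : K.Connected) (hKm : IsModular K)
    (x y z : V) : 2 * steinerDist K {x, y, z} = K.dist x y + K.dist x z + K.dist y z :=
  two_mul_steinerDist_of_mem_interval hK (hKm x y z).some_mem

end Steiner

section Counting

variable {V M : Type*} [Fintype V] [DecidableEq V] [AddCommMonoid M]

/-- Each pair `u ≠ v` lies in `(n - 2).choose (k - 2)` of the `k`-subsets. -/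
lemma Finset.sum_powersetCard_sum_sum {k : ℕ} (hk : 2 ≤ k) (f : V → V → M)
    (hf : ∀ v, f v v = 0) :
    ∑ S ∈ univ.powersetCard k, ∑ u ∈ S, ∑ v ∈ S, f u v =
      (Fintype.card V - 2).choose (k - 2) • ∑ u, ∑ v, f u v := by
  have hpair (u v : V) :
      ∑ S ∈ univ.powersetCard k, (if {u, v} ⊆ S then f u v else 0) =
        (Fintype.card V - 2).choose (k - 2) • f u v := by
    obtain rfl | huv := eq_or_ne u v
    · simp [hf]
    have hcard : ({u, v} : Finset V).card = 2 := card_pair huv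
    rw [← sum_filter, sum_const, card_filter_powersetCard_subset _ _ _ (subset_univ _)
      (hcard ▸ hk), hcard, card_univ]
  calc ∑ S ∈ univ.powersetCard k, ∑ u ∈ S, ∑ v ∈ S, f u v
      = ∑ S ∈ univ.powersetCard k, ∑ u, ∑ v, if {u, v} ⊆ S then f u v else 0 := by
        simp only [insert_subset_iff, singleton_subset_iff, ite_and, sum_ite_irrel,
          sum_const_zero, Fintype.sum_ite_mem]
    _ = ∑ u, ∑ v, ∑ S ∈ univ.powersetCard k, if {u, v} ⊆ S then f u v else 0 := by
        rw [sum_comm]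
        exact sum_congr rfl fun _ _ => sum_comm
    _ = _ := by simp only [hpair, smul_sum]

lemma IsModular.four_mul_steinerWiener_three {V : Type*} [Fintype V] {K : SimpleGraph V}
    (hK : K.Connected) (hKm : IsModular K) :
    4 * steinerWiener K 3 = (Fintype.card V - 2) * ∑ u, ∑ v, K.dist u v := by
  classical
  have htriple : ∀ S ∈ univ.powersetCard 3,
      4 * steinerDist K S = ∑ u ∈ S, ∑ v ∈ S, K.dist u v := by
    intro S hS
    obtain ⟨x, y, z, hxy, hxz, hyz, rfl⟩ := card_eq_three.mp (mem_powersetCard.mp hS).2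
    have hsteiner := hKm.two_mul_steinerDist hK x y z
    rw [coe_insert, coe_pair]
    simp only [sum_insert, sum_singleton, mem_insert, mem_singleton, hxy, hxz, hyz, or_self,
      not_false_eq_true, dist_self, K.dist_comm (u := y) (v := x), K.dist_comm (u := z)]
    omega
  rw [steinerWiener, mul_sum, sum_congr rfl htriple,
    sum_powersetCard_sum_sum (k := 3) (by norm_num) K.dist fun _ ↦ dist_self,
    Nat.choose_one_right, smul_eq_mul]

end Counting

section BoxProd

variable {α β : Type*} {G : SimpleGraph α} {H : SimpleGraph β}

lemma SimpleGraph.dist_boxProd (hG : G.Preconnected) (hH : H.Preconnected) (x y : α × β) :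
    (G □ H).dist x y = G.dist x.1 y.1 + H.dist x.2 y.2 := by
  have h : ((G □ H).dist x y : ℕ∞) = G.dist x.1 y.1 + H.dist x.2 y.2 := by
    rw [(hG.boxProd hH x y).coe_dist_eq_edist, edist_boxProd, (hG x.1 y.1).coe_dist_eq_edist,
      (hH x.2 y.2).coe_dist_eq_edist]
  exact_mod_cast h

lemma interval_prod_subset_interval_boxProd (hG : G.Preconnected) (hH : H.Preconnected)
    (x y : α × β) :
    interval G x.1 y.1 ×ˢ interval H x.2 y.2 ⊆ interval (G □ H) x y := by
  rintro m ⟨hm₁, hm₂⟩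
  simp only [interval, Set.mem_ofPred_eq, dist_boxProd hG hH] at *
  omega

lemma IsModular.boxProd (hGm : IsModular G) (hHm : IsModular H) (hG : G.Preconnected)
    (hH : H.Preconnected) : IsModular (G □ H) := by
  intro x y z
  obtain ⟨a, ⟨hxy₁, hxz₁⟩, hyz₁⟩ := hGm x.1 y.1 z.1
  obtain ⟨b, ⟨hxy₂, hxz₂⟩, hyz₂⟩ := hHm x.2 y.2 z.2
  have hsub := interval_prod_subset_interval_boxProd hG hH
  exact ⟨(a, b), ⟨hsub x y ⟨hxy₁, hxy₂⟩, hsub x z ⟨hxz₁, hxz₂⟩⟩,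
    hsub y z ⟨hyz₁, hyz₂⟩⟩

lemma sum_sum_dist_boxProd [Fintype α] [Fintype β] (hG : G.Preconnected)
    (hH : H.Preconnected) :
    ∑ x : α × β, ∑ y : α × β, (G □ H).dist x y =
      Fintype.card β ^ 2 * ∑ a, ∑ a', G.dist a a' +
        Fintype.card α ^ 2 * ∑ b, ∑ b', H.dist b b' := by
  simp only [dist_boxProd hG hH, Fintype.sum_prod_type, sum_add_distrib, sum_const, card_univ,
    smul_eq_mul, mul_sum, sq, mul_assoc]

end BoxProd

/-- For connected modular graphs `G` and `H`, each with at least three vertices,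
`SW_3(G □ H) = (|V(G)|·|V(H)| − 2)·(|V(G)|²/(|V(H)| − 2)·SW_3(H) +
|V(H)|²/(|V(G)| − 2)·SW_3(G))`. -/
theorem steinerWiener_three_boxProd {α β : Type*} (G : SimpleGraph α)
    (H : SimpleGraph β) [Fintype α] [Fintype β] (hG : G.Connected) (hH : H.Connected)
    (hGm : IsModular G) (hHm : IsModular H)
    (hGcard : 3 ≤ Fintype.card α) (hHcard : 3 ≤ Fintype.card β) :
    (steinerWiener (G.boxProd H) 3 : ℝ) =
      ((Fintype.card α : ℝ) * Fintype.card β - 2) *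
        ((Fintype.card α : ℝ) ^ 2 / ((Fintype.card β : ℝ) - 2) * steinerWiener H 3 +
          (Fintype.card β : ℝ) ^ 2 / ((Fintype.card α : ℝ) - 2) * steinerWiener G 3) := by
  have hP := (hGm.boxProd hHm hG.preconnected hH.preconnected).four_mul_steinerWiener_three
    (hG.boxProd hH)
  rw [sum_sum_dist_boxProd hG.preconnected hH.preconnected, Fintype.card_prod] at hP
  have hGW := hGm.four_mul_steinerWiener_three hG
  have hHW := hHm.four_mul_steinerWiener_three hH
  have hnm : 2 ≤ Fintype.card α * Fintype.card β := by nlinarith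
  rw [← Nat.cast_inj (R := ℝ)] at hP hGW hHW
  push_cast [Nat.cast_sub hnm, Nat.cast_sub (by omega : 2 ≤ Fintype.card α),
    Nat.cast_sub (by omega : 2 ≤ Fintype.card β)] at hP hGW hHW
  have hn : (Fintype.card α : ℝ) - 2 ≠ 0 := sub_ne_zero.2 (by norm_cast; omega)
  have hm : (Fintype.card β : ℝ) - 2 ≠ 0 := sub_ne_zero.2 (by norm_cast; omega)
  rw [eq_div_of_mul_eq four_ne_zero ((mul_comm _ _).trans hP),
    eq_div_of_mul_eq four_ne_zero ((mul_comm _ _).trans hGW),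
    eq_div_of_mul_eq four_ne_zero ((mul_comm _ _).trans hHW)]
  field_simp
  ring
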